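/- arXiv:2108.03725 — 3 statements merged into one kernel-verified Lean document; each statement's English description precedes it below -/
import Mathlib

section
/- Let N ≥ 2, d ≥ 1, τ > 0, and let x_i, v_i : [−τ,∞) → ℝ^d (i = 1,…,N) be continuous functions, continuously differentiable on (0,∞), satisfying for t > 0 the Cucker-Smale system with self-delay ẋ_i(t) = v_i(t) and v̇_i(t) = Σ_{j=1}^N ψ_ij(t−τ)(v_j(t−τ) − v_i(t−τ)), with weights ψ_ij(t) := ψ(|x_j(t) − x_i(t)|)/N for a continuous ψ : [0,∞) → [0,1]. Assume each initial velocity v_i is constant on the interval [−τ,0], and that there exists C ∈ (0,1) such that Ψ(d_x^0 + d_v^0/C) − C ≥ 4τ e^{Cτ}(e^{Cτ} − 1)/(Cτ). Then sup_{t≥0} d_x(t) < ∞, lim_{t→∞} d_v(t) = 0, and the velocity diameter decays exponentially with rate C: d_v(t) ≤ d_v^0 e^{−Ct} for all t ≥ 0. -/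
/-!
Fix `M > d_v^0` and compare `d_v` with the barrier `M e^{-Ct}`. While `d_v` stays below it, every
relative position moves by at most `∫ M e^{-Cs} ds ≤ M / C`, so all weights are at least
`Ψ(d_x^0 + M / C) / N`, and every velocity moves by at most `e^{Cτ}(e^{Cτ} - 1)/C · M e^{-Ct}`
over one delay. At a first contact time the square of an extremal relative velocity then
decreases strictly faster than the square of the barrier, which is impossible. The
self-interaction term vanishes, so the delay error enters only with the factor `(N - 1)/N`; this
leaves the strict margin that, by continuity of `ψ`, survives the passage from `d_v^0` to
`M > d_v^0`. Letting `M ↓ d_v^0` gives the sharp decay.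
-/

open Real Set Filter

/-- The diameter at time `t` of the configuration given by the trajectories `y`. -/
noncomputable def diamAt {N d : ℕ} (y : Fin N → ℝ → EuclideanSpace ℝ (Fin d)) (t : ℝ) : ℝ :=
  ⨆ p : Fin N × Fin N, ‖y p.1 t - y p.2 t‖

/-- The nonincreasing rearrangement `Ψ(u) = min_{s ∈ [0,u]} ψ(s)` of the influence function. -/
noncomputable def Psi (ψ : ℝ → ℝ) (u : ℝ) : ℝ := sInf (ψ '' Set.Icc 0 u)

open Topology InnerProductSpace

section RealAnalysis

theorem le_of_eventually_lt_at_contact {f B : ℝ → ℝ} {a : ℝ} (hf : ContinuousOn f (Ici a))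
    (hB : ContinuousOn B (Ici a)) (ha : f a < B a)
    (hcontact : ∀ t, a < t → (∀ s ∈ Icc a t, f s ≤ B s) → f t = B t →
      ∀ᶠ z in 𝓝[>] t, f z < B z) :
    ∀ t, a ≤ t → f t ≤ B t := by
  by_contra! hbad
  set A := {t | a ≤ t ∧ B t < f t}
  have hne : A.Nonempty := hbad
  have hbdd : BddBelow A := ⟨a, fun t ht => ht.1⟩
  have hat₀ : a ≤ sInf A := le_csInf hne fun t ht => ht.1
  have hge : B (sInf A) ≤ f (sInf A) :=
    (closure_minimal (fun t ht => mem_sep ht.1 ht.2.le) (isClosed_Ici.isClosed_le hB hf)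
      (csInf_mem_closure hne hbdd)).2
  have hlt : a < sInf A := hat₀.lt_of_ne fun h => by rw [← h] at hge; linarith
  have hbefore : ∀ s ∈ Icc a (sInf A), f s ≤ B s := by
    have hIco : Ico a (sInf A) ⊆ {t ∈ Ici a | f t ≤ B t} := fun s hs =>
      mem_sep hs.1 (not_lt.1 fun h => (csInf_le hbdd ⟨hs.1, h⟩).not_gt hs.2)
    intro s hs
    rw [← closure_Ico hlt.ne] at hs
    exact (closure_minimal hIco (isClosed_Ici.isClosed_le hf hB) hs).2
  have heq : f (sInf A) = B (sInf A) := (hbefore _ ⟨hat₀, le_rfl⟩).antisymm hge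
  obtain ⟨u, hu, hsub⟩ :=
    mem_nhdsGT_iff_exists_Ioo_subset.1 (hcontact _ hlt hbefore heq)
  obtain ⟨z, hzA, hzu⟩ := exists_lt_of_csInf_lt hne hu
  have hz : sInf A < z :=
    (csInf_le hbdd hzA).lt_of_ne fun h => by rw [← h] at hzA; linarith [hzA.2]
  exact (hsub ⟨hz, hzu⟩ : f z < B z).not_gt hzA.2

theorem eventually_lt_of_hasDerivAt_lt {g B : ℝ → ℝ} {g' B' t : ℝ} (hg : HasDerivAt g g' t)
    (hB : HasDerivAt B B' t) (hle : g t ≤ B t) (hlt : g' < B') :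
    ∀ᶠ z in 𝓝[>] t, g z < B z := by
  have hslope := ((hg.sub hB).hasDerivWithinAt (s := Ioi t)).limsup_slope_le' (lt_irrefl t)
    (sub_neg.2 hlt)
  filter_upwards [hslope, self_mem_nhdsWithin] with z hz hzt
  rw [slope_def_field, div_neg_iff] at hz
  rcases hz with ⟨-, hz⟩ | ⟨hz, -⟩
  · exact absurd hz (not_lt.2 (sub_pos.2 hzt).le)
  · simp only [Pi.sub_apply] at hz
    linarith

theorem hasDerivAt_mul_exp_neg_mul (M C t : ℝ) :
    HasDerivAt (fun z => M * exp (-C * z)) (M * exp (-C * t) * -C) t := by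
  simpa [mul_assoc] using (((hasDerivAt_id' t).const_mul (-C)).exp).const_mul M

theorem norm_sub_le_of_norm_deriv_le_mul_exp {E : Type*} [NormedAddCommGroup E]
    [NormedSpace ℝ E] [CompleteSpace E] {f f' : ℝ → E} {a b K C : ℝ} (hab : a ≤ b) (hC : C ≠ 0)
    (hf : ContinuousOn f (Icc a b)) (hf' : ∀ s ∈ Ioo a b, HasDerivAt f (f' s) s)
    (hint : IntervalIntegrable f' MeasureTheory.volume a b)
    (hbound : ∀ s ∈ Ioc a b, ‖f' s‖ ≤ K * exp (-C * s)) :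
    ‖f b - f a‖ ≤ K / C * (exp (-C * a) - exp (-C * b)) := by
  have hG : ∀ s, HasDerivAt (fun s => -(K / C) * exp (-C * s)) (K * exp (-C * s)) s := by
    intro s
    exact ((((hasDerivAt_id' s).const_mul (-C)).exp).const_mul (-(K / C))).congr_deriv
      (by field_simp)
  rw [← intervalIntegral.integral_eq_sub_of_hasDerivAt_of_le hab hf hf' hint]
  calc ‖∫ s in a..b, f' s‖ ≤ ∫ s in a..b, K * exp (-C * s) :=
        intervalIntegral.norm_integral_le_of_norm_le hab (.of_forall hbound)
          (by apply Continuous.intervalIntegrable; fun_prop)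
    _ = K / C * (exp (-C * a) - exp (-C * b)) := by
        rw [intervalIntegral.integral_eq_sub_of_hasDerivAt (fun s _ => hG s)
          (by apply Continuous.intervalIntegrable; fun_prop)]
        ring

end RealAnalysis

section InnerProduct

variable {E : Type*} [NormedAddCommGroup E] [InnerProductSpace ℝ E]

theorem eventually_norm_lt_of_inner_lt {w : ℝ → E} {w' : E} {B : ℝ → ℝ} {B' t : ℝ}
    (hw : HasDerivAt w w' t) (hB : HasDerivAt B B' t) (heq : ‖w t‖ = B t)
    (hlt : ⟪w t, w'⟫_ℝ < B t * B') :
    ∀ᶠ z in 𝓝[>] t, ‖w z‖ < B z := by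
  have hBpos : 0 < B t := by
    refine (heq ▸ norm_nonneg (w t)).lt_of_ne fun h => ?_
    have hw0 : w t = 0 := norm_eq_zero.1 (heq.trans h.symm)
    simp [hw0, ← h] at hlt
  have hsq := eventually_lt_of_hasDerivAt_lt hw.norm_sq (hB.fun_pow 2) (by rw [heq])
    (by norm_num; linarith)
  filter_upwards [hsq, nhdsWithin_le_nhds (hB.continuousAt.eventually (lt_mem_nhds hBpos))]
    with z hz hBz
  exact lt_of_pow_lt_pow_left₀ 2 hBz.le hz

variable {ι : Type*}

theorem inner_sub_nonpos_of_forall_norm_sub_le {u : ι → E} {i j : ι}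
    (hdiam : ∀ k l, ‖u k - u l‖ ≤ ‖u i - u j‖) (k : ι) :
    ⟪u k - u i, u i - u j⟫_ℝ ≤ 0 := by
  have hsplit : u k - u i = (u k - u j) - (u i - u j) := by abel
  rw [hsplit, inner_sub_left, real_inner_self_eq_norm_sq]
  nlinarith [real_inner_le_norm (u k - u j) (u i - u j), hdiam k j, norm_nonneg (u i - u j)]

theorem inner_sum_smul_sub_le [Fintype ι] (u u' : ι → E) (a : ι → ℝ) (i : ι) (e : E) {m c ε : ℝ}
    (hm : 0 ≤ m) (ha : ∀ k, m ≤ a k ∧ a k ≤ c) (hu' : ∀ k, ‖u' k - u k‖ ≤ ε)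
    (hdir : ∀ k, ⟪u k - u i, e⟫_ℝ ≤ 0) :
    ⟪∑ k, a k • (u' k - u' i), e⟫_ℝ ≤
      m * ∑ k, ⟪u k - u i, e⟫_ℝ + (Fintype.card ι - 1) * (c * (2 * ε * ‖e‖)) := by
  classical
  have hterm : ∀ k, a k * ⟪u' k - u' i, e⟫_ℝ ≤ m * ⟪u k - u i, e⟫_ℝ + c * (2 * ε * ‖e‖) := by
    intro k
    have hsplit : u' k - u' i = (u k - u i) + ((u' k - u k) - (u' i - u i)) := by abel
    have herr : ⟪(u' k - u k) - (u' i - u i), e⟫_ℝ ≤ 2 * ε * ‖e‖ := by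
      calc _ ≤ ‖(u' k - u k) - (u' i - u i)‖ * ‖e‖ := real_inner_le_norm _ _
        _ ≤ (ε + ε) * ‖e‖ := by
          gcongr
          exact (norm_sub_le _ _).trans (add_le_add (hu' k) (hu' i))
        _ = 2 * ε * ‖e‖ := by ring
    have hε : 0 ≤ 2 * ε * ‖e‖ := by
      have := (norm_nonneg _).trans (hu' i)
      positivity
    rw [hsplit, inner_add_left, mul_add]
    have h1 : a k * ⟪u k - u i, e⟫_ℝ ≤ m * ⟪u k - u i, e⟫_ℝ :=
      mul_le_mul_of_nonpos_right (ha k).1 (hdir k)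
    have h2 : a k * ⟪(u' k - u k) - (u' i - u i), e⟫_ℝ ≤ c * (2 * ε * ‖e‖) :=
      (mul_le_mul_of_nonneg_left herr (hm.trans (ha k).1)).trans
        (mul_le_mul_of_nonneg_right (ha k).2 hε)
    linarith
  have hcard : ((Finset.univ.erase i).card : ℝ) = Fintype.card ι - 1 := by
    rw [Finset.card_erase_of_mem (Finset.mem_univ i), Finset.card_univ,
      Nat.cast_sub (Fintype.card_pos_iff.2 ⟨i⟩)]
    simp
  calc ⟪∑ k, a k • (u' k - u' i), e⟫_ℝ = ∑ k ∈ Finset.univ.erase i, a k * ⟪u' k - u' i, e⟫_ℝ := by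
        rw [sum_inner, Finset.sum_erase _ (by simp)]
        simp only [real_inner_smul_left]
    _ ≤ ∑ k ∈ Finset.univ.erase i, (m * ⟪u k - u i, e⟫_ℝ + c * (2 * ε * ‖e‖)) :=
        Finset.sum_le_sum fun k _ => hterm k
    _ = m * ∑ k, ⟪u k - u i, e⟫_ℝ + (Fintype.card ι - 1) * (c * (2 * ε * ‖e‖)) := by
        rw [Finset.sum_add_distrib, ← Finset.mul_sum, Finset.sum_erase _ (by simp),
          Finset.sum_const, nsmul_eq_mul, hcard]

theorem inner_sum_smul_sub_sub_sum_smul_sub_le [Fintype ι] (u u' : ι → E) (a b : ι → ℝ) (i j : ι)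
    {m c ε : ℝ} (hm : 0 ≤ m) (ha : ∀ k, m ≤ a k ∧ a k ≤ c) (hb : ∀ k, m ≤ b k ∧ b k ≤ c)
    (hu' : ∀ k, ‖u' k - u k‖ ≤ ε) (hdiam : ∀ k l, ‖u k - u l‖ ≤ ‖u i - u j‖) :
    ⟪∑ k, a k • (u' k - u' i) - ∑ k, b k • (u' k - u' j), u i - u j⟫_ℝ ≤
      -(Fintype.card ι * m) * ‖u i - u j‖ ^ 2 +
        (Fintype.card ι - 1) * (c * (4 * ε * ‖u i - u j‖)) := by
  have hdiam' : ∀ k l, ‖u k - u l‖ ≤ ‖u j - u i‖ := fun k l => norm_sub_rev (u i) (u j) ▸ hdiam k l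
  have hi := inner_sum_smul_sub_le u u' a i (u i - u j) hm ha hu'
    (inner_sub_nonpos_of_forall_norm_sub_le hdiam)
  have hj := inner_sum_smul_sub_le u u' b j (u j - u i) hm hb hu'
    (inner_sub_nonpos_of_forall_norm_sub_le hdiam')
  have hpair : ∀ k, ⟪u k - u i, u i - u j⟫_ℝ + ⟪u k - u j, u j - u i⟫_ℝ = -‖u i - u j‖ ^ 2 := by
    intro k
    rw [← neg_sub (u i) (u j), inner_neg_right, ← sub_eq_add_neg, ← inner_sub_left,
      sub_sub_sub_cancel_left, ← neg_sub (u i) (u j), inner_neg_left, real_inner_self_eq_norm_sq]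
  have hsum : ∑ k, ⟪u k - u i, u i - u j⟫_ℝ + ∑ k, ⟪u k - u j, u j - u i⟫_ℝ =
      -(Fintype.card ι * ‖u i - u j‖ ^ 2) := by
    simp [← Finset.sum_add_distrib, hpair]
  rw [← neg_sub (u i) (u j), inner_neg_right, norm_neg, neg_sub] at hj
  rw [inner_sub_left]
  linear_combination hi + hj + m * hsum

end InnerProduct

section Diameter

variable {N d : ℕ} (y : Fin N → ℝ → EuclideanSpace ℝ (Fin d))

theorem norm_sub_le_diamAt (t : ℝ) (i j : Fin N) : ‖y i t - y j t‖ ≤ diamAt y t :=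
  le_ciSup (Set.finite_range fun p : Fin N × Fin N => ‖y p.1 t - y p.2 t‖).bddAbove (i, j)

theorem diamAt_nonneg (t : ℝ) : 0 ≤ diamAt y t :=
  Real.iSup_nonneg fun _ => norm_nonneg _

theorem diamAt_le [NeZero N] {t c : ℝ} (h : ∀ i j, ‖y i t - y j t‖ ≤ c) : diamAt y t ≤ c :=
  ciSup_le fun p => h p.1 p.2

theorem diamAt_lt [NeZero N] {t c : ℝ} (h : ∀ i j, ‖y i t - y j t‖ < c) : diamAt y t < c := by
  obtain ⟨p, hp⟩ := Finite.exists_max fun p : Fin N × Fin N => ‖y p.1 t - y p.2 t‖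
  exact (ciSup_le hp).trans_lt (h p.1 p.2)

theorem continuousOn_diamAt [NeZero N] {s : Set ℝ} (hy : ∀ i, ContinuousOn (y i) s) :
    ContinuousOn (diamAt y) s := by
  have hsup : diamAt y = fun t => Finset.univ.sup' Finset.univ_nonempty
      fun p : Fin N × Fin N => ‖y p.1 t - y p.2 t‖ := by
    funext t
    rw [Finset.sup'_univ_eq_ciSup]
    rfl
  rw [hsup]
  exact ContinuousOn.finset_sup'_apply _ fun p _ => ((hy p.1).sub (hy p.2)).norm

variable {y}

theorem diamAt_le_sSup_image_Icc [NeZero N] {a b : ℝ} (hy : ∀ i, ContinuousOn (y i) (Icc a b))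
    {u : ℝ} (hu : u ∈ Icc a b) : diamAt y u ≤ sSup (diamAt y '' Icc a b) :=
  le_csSup (isCompact_Icc.bddAbove_image (continuousOn_diamAt y hy)) (mem_image_of_mem _ hu)

theorem eventually_diamAt_lt [NeZero N] {B : ℝ → ℝ} {t : ℝ} (hy : ∀ i, ContinuousAt (y i) t)
    (hB : ContinuousAt B t) (hle : diamAt y t ≤ B t)
    (hactive : ∀ i j, ‖y i t - y j t‖ = B t → ∀ᶠ z in 𝓝[>] t, ‖y i z - y j z‖ < B z) :
    ∀ᶠ z in 𝓝[>] t, diamAt y z < B z := by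
  have hpair : ∀ p : Fin N × Fin N, ∀ᶠ z in 𝓝[>] t, ‖y p.1 z - y p.2 z‖ < B z := by
    rintro ⟨i, j⟩
    rcases ((norm_sub_le_diamAt y t i j).trans hle).lt_or_eq with hlt | heq
    · exact nhdsWithin_le_nhds ((((hy i).sub (hy j)).norm).eventually_lt hB hlt)
    · exact hactive i j heq
  filter_upwards [eventually_all.2 hpair] with z hz
  exact diamAt_lt y fun i j => hz (i, j)

end Diameter

section Rearrangement

variable {ψ : ℝ → ℝ}

theorem Psi_le_apply (hψ : Continuous ψ) {u s : ℝ} (hs : s ∈ Icc 0 u) : Psi ψ u ≤ ψ s :=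
  csInf_le (isCompact_Icc.bddBelow_image hψ.continuousOn) (mem_image_of_mem ψ hs)

theorem Psi_nonneg (hψ : ∀ s, 0 ≤ s → ψ s ∈ Icc 0 1) (u : ℝ) : 0 ≤ Psi ψ u :=
  Real.sInf_nonneg fun _ ⟨s, hs, hψs⟩ => hψs ▸ (hψ s hs.1).1

theorem eventually_lt_Psi (hψ : Continuous ψ) {R c : ℝ} (hR : 0 ≤ R) (hc : c < Psi ψ R) :
    ∀ᶠ u in 𝓝[≥] R, c < Psi ψ u := by
  obtain ⟨c', hcc', hc'R⟩ := exists_between hc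
  obtain ⟨δ, hδ, hnear⟩ := Metric.eventually_nhds_iff.1 (hψ.continuousAt.eventually
    (lt_mem_nhds (hc'R.trans_le (Psi_le_apply hψ ⟨hR, le_rfl⟩))))
  filter_upwards [Ico_mem_nhdsGE (lt_add_of_pos_right R hδ)] with u hu
  refine hcc'.trans_le (le_csInf ((nonempty_Icc.2 (hR.trans hu.1)).image ψ) ?_)
  rintro _ ⟨s, hs, rfl⟩
  rcases le_or_gt s R with hsR | hRs
  · exact hc'R.le.trans (Psi_le_apply hψ ⟨hs.1, hsR⟩)
  · have hdist : dist s R < δ := by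
      rw [Real.dist_eq, abs_of_pos (sub_pos.2 hRs)]
      linarith [hs.2, hu.2]
    exact (hnear hdist).le

end Rearrangement

section CuckerSmale

variable {N d : ℕ} {τ : ℝ} {ψ : ℝ → ℝ} {x v : Fin N → ℝ → EuclideanSpace ℝ (Fin d)}

noncomputable def alignmentForce (ψ : ℝ → ℝ) (x v : Fin N → ℝ → EuclideanSpace ℝ (Fin d))
    (i : Fin N) (s : ℝ) : EuclideanSpace ℝ (Fin d) :=
  ∑ j, (ψ ‖x j s - x i s‖ / (N : ℝ)) • (v j s - v i s)

structure IsSelfDelayedCSSolution (τ : ℝ) (ψ : ℝ → ℝ)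
    (x v : Fin N → ℝ → EuclideanSpace ℝ (Fin d)) : Prop where
  continuousOn_x : ∀ i, ContinuousOn (x i) (Ici (-τ))
  continuousOn_v : ∀ i, ContinuousOn (v i) (Ici (-τ))
  hasDerivAt_x : ∀ i t, 0 < t → HasDerivAt (x i) (v i t) t
  hasDerivAt_v : ∀ i t, 0 < t → HasDerivAt (v i) (alignmentForce ψ x v i (t - τ)) t

theorem continuousOn_alignmentForce (hψ : Continuous ψ) {s : Set ℝ}
    (hx : ∀ i, ContinuousOn (x i) s) (hv : ∀ i, ContinuousOn (v i) s) (i : Fin N) :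
    ContinuousOn (alignmentForce ψ x v i) s :=
  continuousOn_finsetSum _ fun j _ =>
    ((hψ.comp_continuousOn ((hx j).sub (hx i)).norm).div_const _).smul ((hv j).sub (hv i))

theorem norm_alignmentForce_le [NeZero N] (hψ : ∀ s, 0 ≤ s → ψ s ∈ Icc 0 1) (i : Fin N)
    (s : ℝ) : ‖alignmentForce ψ x v i s‖ ≤ diamAt v s := by
  have hN : (0 : ℝ) < N := Nat.cast_pos.2 (NeZero.pos N)
  calc ‖alignmentForce ψ x v i s‖
      ≤ ∑ j, ‖(ψ ‖x j s - x i s‖ / (N : ℝ)) • (v j s - v i s)‖ := norm_sum_le _ _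
    _ ≤ ∑ _j : Fin N, 1 / (N : ℝ) * diamAt v s := by
        refine Finset.sum_le_sum fun j _ => ?_
        obtain ⟨h0, h1⟩ := hψ _ (norm_nonneg (x j s - x i s))
        rw [norm_smul, Real.norm_of_nonneg (div_nonneg h0 hN.le)]
        gcongr
        exact norm_sub_le_diamAt v s j i
    _ = diamAt v s := by
        rw [Finset.sum_const, Finset.card_univ, Fintype.card_fin, nsmul_eq_mul]
        field_simp

theorem norm_sub_le_add_div_of_diamAt_le (hs : IsSelfDelayedCSSolution τ ψ x v) (hτ : 0 ≤ τ)
    {C M dx0 t : ℝ} (hC : 0 < C) (hM : 0 ≤ M) (hdx : ∀ u ∈ Icc (-τ) 0, diamAt x u ≤ dx0)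
    (ht : -τ ≤ t) (hdecay : ∀ u ∈ Ioc 0 t, diamAt v u ≤ M * exp (-C * u)) (k i : Fin N) :
    ‖x k t - x i t‖ ≤ dx0 + M / C := by
  have hMC : 0 ≤ M / C := div_nonneg hM hC.le
  rcases le_or_gt t 0 with ht0 | ht0
  · linarith [norm_sub_le_diamAt x t k i, hdx t ⟨ht, ht0⟩]
  have hsub : Icc 0 t ⊆ Ici (-τ) := fun u hu => (neg_nonpos.2 hτ).trans hu.1
  have hdrift := norm_sub_le_of_norm_deriv_le_mul_exp (f := fun u => x k u - x i u) ht0.le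
    hC.ne' (((hs.continuousOn_x k).sub (hs.continuousOn_x i)).mono hsub)
    (fun u hu => (hs.hasDerivAt_x k u hu.1).sub (hs.hasDerivAt_x i u hu.1))
    ((((hs.continuousOn_v k).sub (hs.continuousOn_v i)).mono hsub).intervalIntegrable_of_Icc
      ht0.le)
    (fun u hu => (norm_sub_le_diamAt v u k i).trans (hdecay u hu))
  rw [mul_zero, exp_zero] at hdrift
  calc ‖x k t - x i t‖ ≤ ‖x k 0 - x i 0‖ + ‖(x k t - x i t) - (x k 0 - x i 0)‖ :=
        norm_le_norm_add_norm_sub' _ _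
    _ ≤ dx0 + M / C := add_le_add
        ((norm_sub_le_diamAt x 0 k i).trans (hdx 0 ⟨neg_nonpos.2 hτ, le_rfl⟩))
        (hdrift.trans (mul_le_of_le_one_right hMC (by linarith [exp_pos (-C * t)])))

noncomputable def delayGain (C τ : ℝ) : ℝ := exp (C * τ) * (exp (C * τ) - 1) / C

theorem delayGain_pos {C τ : ℝ} (hC : 0 < C) (hτ : 0 < τ) : 0 < delayGain C τ :=
  div_pos (mul_pos (exp_pos _) (sub_pos.2 (one_lt_exp_iff.2 (mul_pos hC hτ)))) hC

theorem norm_sub_delay_le_mul_exp [NeZero N] (hs : IsSelfDelayedCSSolution τ ψ x v)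
    (hτ : 0 ≤ τ) (hψc : Continuous ψ) (hψ : ∀ s, 0 ≤ s → ψ s ∈ Icc 0 1)
    (hconst : ∀ i, ∀ t ∈ Icc (-τ) 0, v i t = v i 0) {C M t : ℝ} (hC : 0 < C) (hM : 0 ≤ M)
    (ht : 0 ≤ t) (hdecay : ∀ u ∈ Icc (-τ) t, diamAt v u ≤ M * exp (-C * u)) (b : Fin N) :
    ‖v b (t - τ) - v b t‖ ≤ delayGain C τ * (M * exp (-C * t)) := by
  -- For `t < τ` the delayed time lies in `[-τ, 0]`, where `v` is constant, so it suffices to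
  -- integrate `v'` over `[max (t - τ) 0, t]`, where the equation holds.
  set m := max (t - τ) 0 with hm_def
  have hm0 : 0 ≤ m := le_max_right _ _
  have hmt : m ≤ t := max_le (by linarith) ht
  have hvm : v b m = v b (t - τ) := by
    rcases le_total (t - τ) 0 with h | h
    · rw [hm_def, max_eq_right h, hconst b (t - τ) ⟨by linarith, h⟩]
    · rw [hm_def, max_eq_left h]
  have hshift : MapsTo (· - τ) (Icc m t) (Ici (-τ)) := fun u hu => by
    simp only [mem_Ici]
    linarith [hu.1]
  have hforce : ContinuousOn (fun s => alignmentForce ψ x v b (s - τ)) (Icc m t) :=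
    (continuousOn_alignmentForce hψc hs.continuousOn_x hs.continuousOn_v b).comp
      (continuousOn_id.sub continuousOn_const) hshift
  have hdrift := norm_sub_le_of_norm_deriv_le_mul_exp (K := M * exp (C * τ)) hmt hC.ne'
    ((hs.continuousOn_v b).mono fun u hu => (by linarith [hu.1] : -τ ≤ u))
    (fun s hs' => hs.hasDerivAt_v b s (hm0.trans_lt hs'.1))
    (hforce.intervalIntegrable_of_Icc hmt) fun s hs' => by
      calc ‖alignmentForce ψ x v b (s - τ)‖ ≤ diamAt v (s - τ) := norm_alignmentForce_le hψ b _
        _ ≤ M * exp (-C * (s - τ)) := hdecay _ ⟨by linarith [hs'.1], by linarith [hs'.2]⟩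
        _ = M * exp (C * τ) * exp (-C * s) := by rw [mul_assoc, ← exp_add]; ring_nf
  have hm : exp (-C * m) ≤ exp (C * τ) * exp (-C * t) := by
    rw [← exp_add]
    exact exp_le_exp.2 (by nlinarith [le_max_left (t - τ) 0])
  rw [← hvm, norm_sub_rev]
  calc ‖v b t - v b m‖ ≤ M * exp (C * τ) / C * (exp (-C * m) - exp (-C * t)) := hdrift
    _ ≤ M * exp (C * τ) / C * (exp (C * τ) * exp (-C * t) - exp (-C * t)) := by gcongr
    _ = delayGain C τ * (M * exp (-C * t)) := by rw [delayGain]; ring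

theorem eventually_diamAt_lt_of_contact [NeZero N] (hs : IsSelfDelayedCSSolution τ ψ x v)
    (hψ : ∀ s, 0 ≤ s → ψ s ∈ Icc 0 1) {C M Ψ ε t : ℝ} (ht : 0 < t) (hM : 0 < M) (hΨ : 0 ≤ Ψ)
    (hcoef : ∀ k a, Ψ ≤ ψ ‖x k (t - τ) - x a (t - τ)‖)
    (hvel : ∀ k, ‖v k (t - τ) - v k t‖ ≤ ε) (hcontact : diamAt v t = M * exp (-C * t))
    (hgap : 4 * ((N - 1) / N * ε) < (Ψ - C) * (M * exp (-C * t))) :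
    ∀ᶠ z in 𝓝[>] t, diamAt v z < M * exp (-C * z) := by
  have hN : (0 : ℝ) < N := Nat.cast_pos.2 (NeZero.pos N)
  have hD : 0 < M * exp (-C * t) := by positivity
  refine eventually_diamAt_lt (fun i => (hs.hasDerivAt_v i t ht).continuousAt)
    (hasDerivAt_mul_exp_neg_mul M C t).continuousAt hcontact.le fun i j hij => ?_
  refine eventually_norm_lt_of_inner_lt ((hs.hasDerivAt_v i t ht).sub (hs.hasDerivAt_v j t ht))
    (hasDerivAt_mul_exp_neg_mul M C t) hij ?_
  have hcoef' : ∀ a k, Ψ / N ≤ ψ ‖x k (t - τ) - x a (t - τ)‖ / N ∧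
      ψ ‖x k (t - τ) - x a (t - τ)‖ / N ≤ 1 / N := fun a k =>
    ⟨by gcongr; exact hcoef k a, by gcongr; exact (hψ _ (norm_nonneg _)).2⟩
  have hdiam : ∀ k l, ‖v k t - v l t‖ ≤ ‖v i t - v j t‖ := fun k l =>
    hij ▸ hcontact ▸ norm_sub_le_diamAt v t k l
  have key := inner_sum_smul_sub_sub_sum_smul_sub_le (fun k => v k t) (fun k => v k (t - τ))
    _ _ i j (div_nonneg hΨ hN.le) (hcoef' i) (hcoef' j) hvel hdiam
  rw [Fintype.card_fin, mul_div_cancel₀ _ hN.ne', hij] at key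
  rw [real_inner_comm]
  calc _ ≤ -Ψ * (M * exp (-C * t)) ^ 2 + (N - 1) * (1 / N * (4 * ε * (M * exp (-C * t)))) := key
    _ = -Ψ * (M * exp (-C * t)) ^ 2 + 4 * ((N - 1) / N * ε) * (M * exp (-C * t)) := by ring
    _ < M * exp (-C * t) * (M * exp (-C * t) * -C) := by
        nlinarith [mul_lt_mul_of_pos_right hgap hD]

theorem diamAt_le_mul_exp_of_lt_Psi [NeZero N] (hs : IsSelfDelayedCSSolution τ ψ x v)
    (hτ : 0 ≤ τ) (hψc : Continuous ψ) (hψ : ∀ s, 0 ≤ s → ψ s ∈ Icc 0 1)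
    (hconst : ∀ i, ∀ t ∈ Icc (-τ) 0, v i t = v i 0) {C M dx0 dv0 : ℝ} (hC : 0 < C)
    (hdx : ∀ u ∈ Icc (-τ) 0, diamAt x u ≤ dx0) (hdv : ∀ u ∈ Icc (-τ) 0, diamAt v u ≤ dv0)
    (hM : dv0 < M) (hΨ : C + (N - 1) / N * (4 * delayGain C τ) < Psi ψ (dx0 + M / C)) :
    ∀ t, 0 ≤ t → diamAt v t ≤ M * exp (-C * t) := by
  have h0 : (0 : ℝ) ∈ Icc (-τ) 0 := ⟨neg_nonpos.2 hτ, le_rfl⟩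
  have hMpos : 0 < M := ((diamAt_nonneg v 0).trans (hdv 0 h0)).trans_lt hM
  refine le_of_eventually_lt_at_contact
    ((continuousOn_diamAt v hs.continuousOn_v).mono (Ici_subset_Ici.2 (neg_nonpos.2 hτ)))
    (by fun_prop) (by simpa using (hdv 0 h0).trans_lt hM) fun t ht hbefore hcontact => ?_
  have hhist : ∀ u ∈ Icc (-τ) t, diamAt v u ≤ M * exp (-C * u) := by
    intro u hu
    rcases le_or_gt u 0 with hu0 | hu0
    · calc diamAt v u ≤ M * 1 := by linarith [hdv u ⟨hu.1, hu0⟩]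
        _ ≤ M * exp (-C * u) := by gcongr; exact one_le_exp (by nlinarith)
    · exact hbefore u ⟨hu0.le, hu.2⟩
  have hpos : ∀ k a, ‖x k (t - τ) - x a (t - τ)‖ ≤ dx0 + M / C :=
    norm_sub_le_add_div_of_diamAt_le hs hτ hC hMpos.le hdx (by linarith) fun u hu =>
      hhist u ⟨by linarith [hu.1], by linarith [hu.2]⟩
  refine eventually_diamAt_lt_of_contact hs hψ ht hMpos (Psi_nonneg hψ _)
    (fun k a => Psi_le_apply hψc ⟨norm_nonneg _, hpos k a⟩)
    (norm_sub_delay_le_mul_exp hs hτ hψc hψ hconst hC hMpos.le ht.le hhist) hcontact ?_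
  calc _ = (N - 1) / N * (4 * delayGain C τ) * (M * exp (-C * t)) := by ring
    _ < _ := mul_lt_mul_of_pos_right (by linarith) (by positivity)

theorem diamAt_le_mul_exp [NeZero N] (hs : IsSelfDelayedCSSolution τ ψ x v) (hτ : 0 ≤ τ)
    (hψc : Continuous ψ) (hψ : ∀ s, 0 ≤ s → ψ s ∈ Icc 0 1)
    (hconst : ∀ i, ∀ t ∈ Icc (-τ) 0, v i t = v i 0) {C dx0 dv0 : ℝ} (hC : 0 < C)
    (hdx : ∀ u ∈ Icc (-τ) 0, diamAt x u ≤ dx0) (hdv : ∀ u ∈ Icc (-τ) 0, diamAt v u ≤ dv0)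
    (hΨ : C + (N - 1) / N * (4 * delayGain C τ) < Psi ψ (dx0 + dv0 / C)) {t : ℝ} (ht : 0 ≤ t) :
    diamAt v t ≤ dv0 * exp (-C * t) := by
  have h0 : (0 : ℝ) ∈ Icc (-τ) 0 := ⟨neg_nonpos.2 hτ, le_rfl⟩
  have hR : 0 ≤ dx0 + dv0 / C := add_nonneg ((diamAt_nonneg x 0).trans (hdx 0 h0))
    (div_nonneg ((diamAt_nonneg v 0).trans (hdv 0 h0)) hC.le)
  have hshift : Tendsto (fun M => dx0 + M / C) (𝓝[>] dv0) (𝓝[≥] (dx0 + dv0 / C)) :=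
    tendsto_nhdsWithin_of_tendsto_nhds_of_eventually_within _
      ((Continuous.tendsto (by fun_prop) dv0).mono_left nhdsWithin_le_nhds)
      (eventually_nhdsWithin_of_forall fun M hM => by
        simp only [mem_Ici]
        gcongr
        exact le_of_lt hM)
  refine ge_of_tendsto (((continuous_mul_const (exp (-C * t))).tendsto dv0).mono_left
    (nhdsWithin_le_nhds (s := Ioi dv0))) ?_
  filter_upwards [hshift.eventually (eventually_lt_Psi hψc hR hΨ), self_mem_nhdsWithin]
    with M hM hdvM
  exact diamAt_le_mul_exp_of_lt_Psi hs hτ hψc hψ hconst hC hdx hdv hdvM hM t ht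

end CuckerSmale

theorem flocking_CS_selfdelay_classical_weights_constant_initial_velocity_general
    {N d : ℕ} (hN : 2 ≤ N) {τ : ℝ} (hτ : 0 < τ)
    (x v : Fin N → ℝ → EuclideanSpace ℝ (Fin d))
    (hxc : ∀ i, ContinuousOn (x i) (Ici (-τ)))
    (hvc : ∀ i, ContinuousOn (v i) (Ici (-τ)))
    (ψ : ℝ → ℝ) (hψc : Continuous ψ) (hψ : ∀ s, 0 ≤ s → ψ s ∈ Icc (0 : ℝ) 1)
    (hx' : ∀ i, ∀ t, 0 < t → HasDerivAt (x i) (v i t) t)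
    (hv' : ∀ i, ∀ t, 0 < t → HasDerivAt (v i)
      (∑ j, (ψ ‖x j (t - τ) - x i (t - τ)‖ / (N : ℝ)) • (v j (t - τ) - v i (t - τ))) t)
    (hconst : ∀ i, ∀ t ∈ Icc (-τ) (0 : ℝ), v i t = v i 0)
    (dx0 dv0 : ℝ)
    (hdx0 : dx0 = sSup (diamAt x '' Icc (-τ) 0))
    (hdv0 : dv0 = sSup (diamAt v '' Icc (-τ) 0))
    (C : ℝ) (hC : C ∈ Ioo (0 : ℝ) 1)
    (hcond : Psi ψ (dx0 + dv0 / C) - C ≥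
      4 * τ * exp (C * τ) * (exp (C * τ) - 1) / (C * τ)) :
    BddAbove (diamAt x '' Ici 0) ∧
    Tendsto (diamAt v) atTop (nhds 0) ∧
    ∀ t, 0 ≤ t → diamAt v t ≤ dv0 * exp (-C * t) := by
  have : NeZero N := ⟨by omega⟩
  have hs : IsSelfDelayedCSSolution τ ψ x v := ⟨hxc, hvc, hx', hv'⟩
  have hdx : ∀ u ∈ Icc (-τ) 0, diamAt x u ≤ dx0 := fun u hu =>
    hdx0 ▸ diamAt_le_sSup_image_Icc (fun i => (hxc i).mono Icc_subset_Ici_self) hu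
  have hdv : ∀ u ∈ Icc (-τ) 0, diamAt v u ≤ dv0 := fun u hu =>
    hdv0 ▸ diamAt_le_sSup_image_Icc (fun i => (hvc i).mono Icc_subset_Ici_self) hu
  have hdv_nonneg : 0 ≤ dv0 := (diamAt_nonneg v 0).trans (hdv 0 ⟨by linarith, le_rfl⟩)
  have hΨ : C + (N - 1) / N * (4 * delayGain C τ) < Psi ψ (dx0 + dv0 / C) := by
    have hN' : ((N : ℝ) - 1) / N < 1 := (div_lt_one (by positivity)).2 (by linarith)
    have hθ : 4 * τ * exp (C * τ) * (exp (C * τ) - 1) / (C * τ) = 4 * delayGain C τ := by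
      rw [delayGain]
      field_simp
    linarith [mul_lt_of_lt_one_left (mul_pos four_pos (delayGain_pos hC.1 hτ)) hN']
  have hdecay : ∀ t, 0 ≤ t → diamAt v t ≤ dv0 * exp (-C * t) := fun t ht =>
    diamAt_le_mul_exp hs hτ.le hψc hψ hconst hC.1 hdx hdv hΨ ht
  refine ⟨⟨dx0 + dv0 / C, ?_⟩, ?_, hdecay⟩
  · rintro _ ⟨t, ht, rfl⟩
    exact diamAt_le x fun k i => norm_sub_le_add_div_of_diamAt_le hs hτ.le hC.1 hdv_nonneg
      hdx (by linarith [mem_Ici.1 ht]) (fun u hu => hdecay u hu.1.le) k i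
  · refine squeeze_zero' (.of_forall (diamAt_nonneg v)) ((eventually_ge_atTop 0).mono hdecay) ?_
    simpa using (tendsto_exp_neg_atTop_nhds_zero.comp
      (tendsto_id.const_mul_atTop hC.1)).const_mul dv0

theorem flocking_CS_selfdelay_classical_weights_constant_initial_velocity
    {N d : ℕ} (hN : 2 ≤ N) (hd : 1 ≤ d) {τ : ℝ} (hτ : 0 < τ)
    (x v : Fin N → ℝ → EuclideanSpace ℝ (Fin d))
    (hxc : ∀ i, ContinuousOn (x i) (Ici (-τ)))
    (hvc : ∀ i, ContinuousOn (v i) (Ici (-τ)))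
    (ψ : ℝ → ℝ) (hψc : Continuous ψ) (hψ : ∀ s, 0 ≤ s → ψ s ∈ Icc (0 : ℝ) 1)
    (hx' : ∀ i, ∀ t, 0 < t → HasDerivAt (x i) (v i t) t)
    (hv' : ∀ i, ∀ t, 0 < t → HasDerivAt (v i)
      (∑ j, (ψ ‖x j (t - τ) - x i (t - τ)‖ / (N : ℝ)) • (v j (t - τ) - v i (t - τ))) t)
    (hconst : ∀ i, ∀ t ∈ Icc (-τ) (0 : ℝ), v i t = v i 0)
    (dx0 dv0 : ℝ)
    (hdx0 : dx0 = sSup (diamAt x '' Icc (-τ) 0))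
    (hdv0 : dv0 = sSup (diamAt v '' Icc (-τ) 0))
    (C : ℝ) (hC : C ∈ Ioo (0 : ℝ) 1)
    (hcond : Psi ψ (dx0 + dv0 / C) - C ≥
      4 * τ * exp (C * τ) * (exp (C * τ) - 1) / (C * τ)) :
    BddAbove (diamAt x '' Ici 0) ∧
    Tendsto (diamAt v) atTop (nhds 0) ∧
    ∀ t, 0 ≤ t → diamAt v t ≤ dv0 * exp (-C * t) :=
  flocking_CS_selfdelay_classical_weights_constant_initial_velocity_general hN hτ x v hxc hvc ψ hψc
    hψ hx' hv' hconst dx0 dv0 hdx0 hdv0 C hC hcond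
end

section
/- Fix τ > 0 and let u : [−τ,∞) → ℝ be a nonnegative continuous function with piecewise continuous derivative on (τ,∞), such that for almost all t > τ the integro-differential inequality u'(t) ≤ (α/τ) ∫_{t−τ}^t u(s−τ) ds − β u(t) holds, with constants 0 < α < β. Then there exists a unique γ ∈ (0, β − α) such that β − γ = α e^{γτ} (e^{γτ} − 1)/(γτ), and u(t) ≤ (max_{s∈[−τ,τ]} u(s)) e^{−γ(t−τ)} for all t ≥ τ. -/
/-!
The characteristic function `γ ↦ γ + α e^{γτ} (e^{γτ} - 1) / (γτ)` increases strictly on `(0, ∞)`,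
from `α` at `0⁺` to more than `β` at `β - α`; its unique `β`-level is the decay rate `γ`, chosen so
that `w t = M e^{-γ (t - τ)}` solves the delay equation with equality. The comparison runs by
steps of length `τ`: if `u ≤ w` on `[-τ, T - τ]`, the delayed integral of `u` is at most that
of `w` on `(τ, T)`, so `(u - w)' ≤ -β (u - w)` off a countable set and the sign of `u - w` at `τ`
propagates to `T`. The almost-everywhere hypothesis holds at every point off that countable set
because both of its sides are continuous there.
-/

open Real Set Filter MeasureTheory Topology

theorem image_le_of_hasDerivAt_neg_at_level {g g' : ℝ → ℝ} {a b c : ℝ}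
    (hg : ContinuousOn g (Icc a b)) (ha : g a < c)
    (hd : ∀ z ∈ Ioo a b, g z = c → HasDerivAt g (g' z) z ∧ g' z < 0) :
    ∀ z ∈ Icc a b, g z ≤ c := by
  have hclosed : IsClosed ({z | g z ≤ c} ∩ Icc a b) := by
    rw [inter_comm]
    exact isClosed_Icc.isClosed_le hg continuousOn_const
  refine hclosed.Icc_subset_of_forall_exists_gt ha.le fun z ⟨hzc, hz⟩ w hzw => ?_
  suffices h : ∀ᶠ v in 𝓝[>] z, g v ≤ c from (h.and (Ioc_mem_nhdsGT hzw)).exists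
  rcases (show g z ≤ c from hzc).lt_or_eq with hlt | heq
  · have hcont : Tendsto g (𝓝[>] z) (𝓝 (g z)) :=
      (hg z (Ico_subset_Icc_self hz)).mono_left (nhdsWithin_le_of_mem (Icc_mem_nhdsGT_of_mem hz))
    exact (hcont.eventually_lt_const hlt).mono fun v hv => hv.le
  · have hza : a < z := hz.1.lt_of_ne (by rintro rfl; exact ha.ne heq)
    obtain ⟨hder, hneg⟩ := hd z ⟨hza, hz.2⟩ heq
    have hslope : ∀ᶠ v in 𝓝[>] z, slope g z v < 0 :=
      (hasDerivWithinAt_iff_tendsto_slope' (lt_irrefl z)).1 hder.hasDerivWithinAt.Ioi_of_Ici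
        |>.eventually_lt_const hneg
    filter_upwards [hslope, self_mem_nhdsWithin] with v hv hzv
    rw [slope_def_field, div_neg_iff] at hv
    have : z < v := hzv
    rcases hv with ⟨_, h⟩ | ⟨h, _⟩ <;> linarith

theorem antitoneOn_of_hasDerivAt_nonpos_off_countable {f f' : ℝ → ℝ} {a b : ℝ} {S : Set ℝ}
    (hS : S.Countable) (hf : ContinuousOn f (Icc a b))
    (hd : ∀ x ∈ Ioo a b \ S, HasDerivAt f (f' x) x) (hf' : ∀ x ∈ Ioo a b \ S, f' x ≤ 0) :
    AntitoneOn f (Icc a b) := by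
  intro x hx y hy hxy
  refine le_of_forall_pos_lt_add fun ε hε => ?_
  set δ := ε / (y - x + 1)
  have hδ : 0 < δ := div_pos hε (by linarith)
  set g : ℝ → ℝ := fun z => f z - δ * z
  -- `g '' S` is countable, so some level `c` just above `g x` is never reached on `S`; wherever
  -- `g` reaches `c` it is then differentiable with negative derivative.
  obtain ⟨c, hcS, hxc, hcx⟩ : ∃ c ∈ (g '' S)ᶜ, c ∈ Ioo (g x) (g x + δ) :=
    ((hS.image g).dense_compl ℝ).exists_between (by linarith)
  have hsub : Icc x y ⊆ Icc a b := Icc_subset_Icc hx.1 hy.2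
  have hfence := image_le_of_hasDerivAt_neg_at_level (g := g) (g' := fun z => f' z - δ)
    ((hf.mono hsub).sub (continuousOn_const.mul continuousOn_id)) hxc ?_ y ⟨hxy, le_rfl⟩
  · have : δ * (y - x + 1) = ε := div_mul_cancel₀ _ (by linarith)
    simp only [g] at hfence hcx
    nlinarith
  · intro z hz hzc
    have hzS : z ∉ S := fun hzS => hcS ⟨z, hzS, hzc⟩
    have hz' : z ∈ Ioo a b \ S := ⟨⟨hx.1.trans_lt hz.1, hz.2.trans_le hy.2⟩, hzS⟩
    exact ⟨(hd z hz').sub ((hasDerivAt_id z).const_mul δ |>.congr_deriv (mul_one δ)),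
      by linarith [hf' z hz']⟩

theorem le_mul_exp_of_hasDerivAt_le_neg_mul_off_countable {g g' : ℝ → ℝ} {a b β : ℝ}
    {S : Set ℝ} (hS : S.Countable) (hab : a ≤ b) (hg : ContinuousOn g (Icc a b))
    (hd : ∀ x ∈ Ioo a b \ S, HasDerivAt g (g' x) x) (hle : ∀ x ∈ Ioo a b \ S, g' x ≤ -β * g x) :
    g b ≤ g a * exp (-β * (b - a)) := by
  have hanti := antitoneOn_of_hasDerivAt_nonpos_off_countable (f := fun x => g x * exp (β * x))
    (f' := fun x => g' x * exp (β * x) + g x * (exp (β * x) * β)) hS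
    (hg.mul (continuous_exp.comp (continuous_const_mul β)).continuousOn)
    (fun x hx => (hd x hx).mul (((hasDerivAt_id x).const_mul β).exp.congr_deriv (by simp)))
    (fun x hx => by nlinarith [hle x hx, exp_pos (β * x)])
    ⟨le_rfl, hab⟩ ⟨hab, le_rfl⟩ hab
  have hexp : exp (-β * (b - a)) = exp (β * a) * exp (-(β * b)) := by
    rw [← exp_add]; ring_nf
  calc g b = g b * exp (β * b) * exp (-(β * b)) := by
        rw [mul_assoc, ← exp_add, add_neg_cancel, exp_zero, mul_one]
    _ ≤ g a * exp (β * a) * exp (-(β * b)) := by gcongr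
    _ = g a * exp (-β * (b - a)) := by rw [hexp, mul_assoc]

theorem le_of_ae_le_of_continuousOn_diff {X α : Type*} [TopologicalSpace X] [MeasurableSpace X]
    {μ : Measure X} [μ.IsOpenPosMeasure] [TopologicalSpace α] [Preorder α] [OrderClosedTopology α]
    {f g : X → α} {U S : Set X} (hU : IsOpen U) (hS : μ S = 0)
    (hfg : ∀ᵐ x ∂μ, x ∈ U → f x ≤ g x) (hf : ContinuousOn f (U \ S)) (hg : ContinuousOn g U) :
    ∀ x ∈ U \ S, f x ≤ g x := by
  intro x hx
  have hgood : ∀ᵐ y ∂μ, y ∉ S ∧ (y ∈ U → f y ≤ g y) :=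
    (measure_eq_zero_iff_ae_notMem.1 hS).and hfg
  have hx' : x ∈ closure (U ∩ {y | y ∉ S ∧ (y ∈ U → f y ≤ g y)}) :=
    (Measure.dense_of_ae hgood).open_subset_closure_inter hU hx.1
  exact ContinuousWithinAt.closure_le hx' (hf x hx |>.mono fun y hy => ⟨hy.1, hy.2.1⟩)
    (hg x hx.1 |>.mono inter_subset_left) fun y hy => hy.2.2 hy.1

theorem Continuous.continuous_intervalIntegral_sub_left {g : ℝ → ℝ} (hg : Continuous g) (h : ℝ) :
    Continuous fun t => ∫ s in (t - h)..t, g s := by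
  have hG := intervalIntegral.continuous_primitive (μ := volume) hg.intervalIntegrable 0
  have hsplit : (fun t => ∫ s in (t - h)..t, g s) =
      fun t => (∫ s in (0 : ℝ)..t, g s) - ∫ s in (0 : ℝ)..(t - h), g s := by
    ext t
    rw [intervalIntegral.integral_interval_sub_left (hg.intervalIntegrable _ _)
      (hg.intervalIntegrable _ _)]
  rw [hsplit]
  exact hG.sub (hG.comp (continuous_sub_right h))

theorem continuousOn_intervalIntegral_comp_sub {u : ℝ → ℝ} {τ : ℝ} (hτ : 0 ≤ τ)
    (hu : ContinuousOn u (Ici (-τ))) :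
    ContinuousOn (fun t => ∫ s in (t - τ)..t, u (s - τ)) (Ici τ) := by
  have hext : Continuous fun s => u (max (s - τ) (-τ)) :=
    hu.comp_continuous (by fun_prop) fun s => mem_Ici.2 (le_max_right _ _)
  refine (hext.continuous_intervalIntegral_sub_left τ).continuousOn.congr fun t (ht : τ ≤ t) => ?_
  refine intervalIntegral.integral_congr fun s hs => ?_
  rw [uIcc_of_le (by linarith)] at hs
  simp only [max_eq_left (show -τ ≤ s - τ by linarith [hs.1])]

theorem one_lt_exp_sub_one_div {x : ℝ} (hx : 0 < x) : 1 < (exp x - 1) / x := by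
  rw [lt_div_iff₀ hx]
  linarith [add_one_lt_exp hx.ne']

theorem strictMonoOn_exp_mul_exp_sub_one_div :
    StrictMonoOn (fun x => exp x * ((exp x - 1) / x)) (Ioi 0) := by
  intro x (hx : 0 < x) y (hy : 0 < y) hxy
  have hslope : (exp x - 1) / x < (exp y - 1) / y := by
    simpa using strictConvexOn_exp.secant_strict_mono (mem_univ 0) (mem_univ x) (mem_univ y)
      hx.ne' hy.ne' hxy
  have h0 : 0 < (exp x - 1) / x := one_pos.trans (one_lt_exp_sub_one_div hx)
  exact mul_lt_mul (exp_lt_exp.2 hxy) hslope.le h0 (exp_pos y).le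

theorem tendsto_exp_mul_exp_sub_one_div_nhdsGT_zero :
    Tendsto (fun x => exp x * ((exp x - 1) / x)) (𝓝[>] 0) (𝓝 1) := by
  have hslope : Tendsto (fun x => (exp x - 1) / x) (𝓝[≠] 0) (𝓝 1) := by
    have hs : slope exp 0 = fun x => (exp x - 1) / x := by ext x; simp [slope_def_field]
    simpa [hs] using hasDerivAt_iff_tendsto_slope.1 (hasDerivAt_exp 0)
  have hexp : Tendsto exp (𝓝[≠] 0) (𝓝 1) :=
    (continuous_exp.tendsto' 0 1 exp_zero).mono_left nhdsWithin_le_nhds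
  simpa using (hexp.mul hslope).mono_left (nhdsGT_le_nhdsNE 0)

theorem existsUnique_sub_eq_mul_exp_mul_exp_sub_one_div {τ α β : ℝ} (hτ : 0 < τ) (hα : 0 < α)
    (hαβ : α < β) :
    ∃! γ, γ ∈ Ioo 0 (β - α) ∧
      β - γ = α * exp (γ * τ) * ((exp (γ * τ) - 1) / (γ * τ)) := by
  set q : ℝ → ℝ := fun x => exp x * ((exp x - 1) / x)
  set h : ℝ → ℝ := fun γ => γ + α * q (γ * τ)
  have hchar : ∀ γ, β - γ = α * exp (γ * τ) * ((exp (γ * τ) - 1) / (γ * τ)) ↔ h γ = β := by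
    intro γ; simp only [h, q]; constructor <;> intro <;> linarith
  simp only [hchar]
  have hmono : StrictMonoOn h (Ioi 0) := fun x (hx : 0 < x) y (hy : 0 < y) hxy => by
    have := strictMonoOn_exp_mul_exp_sub_one_div (mul_pos hx hτ) (mul_pos hy hτ)
      (mul_lt_mul_of_pos_right hxy hτ)
    simp only [h]
    nlinarith
  have hlim : Tendsto h (𝓝[>] 0) (𝓝 α) := by
    have hmul : Tendsto (fun γ => γ * τ) (𝓝[>] 0) (𝓝[>] 0) :=
      tendsto_nhdsWithin_of_tendsto_nhds_of_eventually_within _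
        (((continuous_mul_const τ).tendsto' 0 0 (zero_mul τ)).mono_left nhdsWithin_le_nhds)
        (eventually_nhdsWithin_of_forall fun γ (hγ : 0 < γ) => mul_pos hγ hτ)
    simpa using (tendsto_nhdsWithin_of_tendsto_nhds tendsto_id).add
      ((tendsto_exp_mul_exp_sub_one_div_nhdsGT_zero.comp hmul).const_mul α)
  have hβα : 0 < β - α := sub_pos.2 hαβ
  have hright : β < h (β - α) := by
    have hx := mul_pos hβα hτ
    have := one_lt_mul_of_lt_of_le (one_lt_exp_iff.2 hx) (one_lt_exp_sub_one_div hx).le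
    simp only [h, q]
    nlinarith
  obtain ⟨γ₀, hγ₀, hγ₀mem⟩ : ∃ γ₀, h γ₀ < β ∧ γ₀ ∈ Ioo 0 (β - α) :=
    ((hlim.eventually_lt_const hαβ).and (Ioo_mem_nhdsGT hβα)).exists
  have hcont : ContinuousOn h (Icc γ₀ (β - α)) := by
    refine ContinuousOn.add continuousOn_id (continuousOn_const.mul ?_)
    refine continuousOn_of_forall_continuousAt fun x hx => ?_
    have : x * τ ≠ 0 := (mul_pos (hγ₀mem.1.trans_le hx.1) hτ).ne'
    simp only [q]
    fun_prop (disch := assumption)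
  obtain ⟨γ, hγ, hγβ⟩ := intermediate_value_Ioo hγ₀mem.2.le hcont ⟨hγ₀, hright⟩
  refine ⟨γ, ⟨⟨hγ₀mem.1.trans hγ.1, hγ.2⟩, hγβ⟩, fun γ' ⟨hγ', hγ'β⟩ => ?_⟩
  exact hmono.injOn hγ'.1 (hγ₀mem.1.trans hγ.1) (hγ'β.trans hγβ.symm)

theorem integral_exp_neg_mul_sub_sub (γ τ t : ℝ) (hγ : γ ≠ 0) :
    ∫ s in (t - τ)..t, exp (-γ * (s - τ - τ)) =
      τ * (exp (γ * τ) * ((exp (γ * τ) - 1) / (γ * τ))) * exp (-γ * (t - τ)) := by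
  rcases eq_or_ne τ 0 with rfl | hτ
  · simp
  have hderiv :
      ∀ s, HasDerivAt (fun s => -exp (-γ * (s - τ - τ)) / γ) (exp (-γ * (s - τ - τ))) s := by
    intro s
    refine ((((hasDerivAt_id s).sub_const τ).sub_const τ).const_mul (-γ)).exp.neg.div_const γ
      |>.congr_deriv ?_
    simp only [id]
    field_simp
  rw [intervalIntegral.integral_eq_sub_of_hasDerivAt (fun s _ => hderiv s)
    ((continuous_exp.comp (by fun_prop)).intervalIntegrable _ _)]
  have h1 : exp (-γ * (t - τ - τ)) = exp (γ * τ) * exp (-γ * (t - τ)) := by rw [← exp_add]; ring_nf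
  have h2 : exp (-γ * (t - τ - τ - τ)) = exp (γ * τ) * exp (γ * τ) * exp (-γ * (t - τ)) := by
    rw [← exp_add, ← exp_add]; ring_nf
  rw [h1, h2]
  field_simp
  ring

theorem le_mul_exp_of_le_mul_exp_on_past {τ α β γ M T : ℝ} {u u' : ℝ → ℝ} {S : Set ℝ}
    (hτ : 0 < τ) (hα : 0 ≤ α) (hγ : γ ≠ 0)
    (hchar : β - γ = α * exp (γ * τ) * ((exp (γ * τ) - 1) / (γ * τ)))
    (hS : S.Countable) (hτT : τ ≤ T) (hu : ContinuousOn u (Icc (-τ) T))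
    (hd : ∀ t ∈ Ioo τ T \ S, HasDerivAt u (u' t) t)
    (hineq : ∀ t ∈ Ioo τ T \ S, u' t ≤ α / τ * (∫ s in (t - τ)..t, u (s - τ)) - β * u t)
    (huτ : u τ ≤ M) (hpast : ∀ s ∈ Icc (-τ) (T - τ), u s ≤ M * exp (-γ * (s - τ))) :
    u T ≤ M * exp (-γ * (T - τ)) := by
  set w : ℝ → ℝ := fun t => M * exp (-γ * (t - τ))
  have hw : ∀ t, HasDerivAt w (-γ * w t) t := fun t =>
    (((hasDerivAt_id t).sub_const τ).const_mul (-γ)).exp.const_mul M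
      |>.congr_deriv (by simp only [w, id]; ring)
  have hdelay : ∀ t ∈ Ioo τ T, α / τ * (∫ s in (t - τ)..t, u (s - τ)) ≤ (β - γ) * w t := by
    intro t ht
    have hsub : MapsTo (fun s => s - τ) (Icc (t - τ) t) (Icc (-τ) T) := fun s hs =>
      ⟨by linarith [hs.1, ht.1], by linarith [hs.2, ht.2]⟩
    calc α / τ * (∫ s in (t - τ)..t, u (s - τ))
        ≤ α / τ * ∫ s in (t - τ)..t, w (s - τ) := by
          gcongr
          refine intervalIntegral.integral_mono_on (by linarith)
            ((hu.comp (by fun_prop) hsub).intervalIntegrable_of_Icc (by linarith))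
            (Continuous.intervalIntegrable (by fun_prop) _ _)
            fun s hs => hpast (s - τ) ⟨(hsub hs).1, by linarith [hs.2, ht.2]⟩
      _ = (β - γ) * w t := by
          simp only [w, intervalIntegral.integral_const_mul, integral_exp_neg_mul_sub_sub γ τ t hγ,
            hchar]
          field_simp
  have hgronwall := le_mul_exp_of_hasDerivAt_le_neg_mul_off_countable (g := fun t => u t - w t)
    (g' := fun t => u' t + γ * w t) (β := β) hS hτT
    ((hu.mono (Icc_subset_Icc (by linarith) le_rfl)).sub (by fun_prop))
    (fun t ht => ((hd t ht).sub (hw t)).congr_deriv (by ring))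
    (fun t ht => by linarith [hineq t ht, hdelay t ht.1])
  have hstart : u τ - w τ ≤ 0 := by simpa [w] using huτ
  exact sub_nonpos.1 (hgronwall.trans (mul_nonpos_of_nonpos_of_nonneg hstart (exp_pos _).le))

theorem le_mul_exp_of_delay_ineq {τ α β γ M : ℝ} {u u' : ℝ → ℝ} {S : Set ℝ}
    (hτ : 0 < τ) (hα : 0 ≤ α) (hγ : 0 < γ)
    (hchar : β - γ = α * exp (γ * τ) * ((exp (γ * τ) - 1) / (γ * τ)))
    (hS : S.Countable) (hu : ContinuousOn u (Ici (-τ)))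
    (hd : ∀ t ∈ Ioi τ \ S, HasDerivAt u (u' t) t)
    (hineq : ∀ t ∈ Ioi τ \ S, u' t ≤ α / τ * (∫ s in (t - τ)..t, u (s - τ)) - β * u t)
    (hM : ∀ s ∈ Icc (-τ) τ, u s ≤ M) (hM0 : 0 ≤ M) :
    ∀ t, τ ≤ t → u t ≤ M * exp (-γ * (t - τ)) := by
  have hsteps : ∀ n : ℕ, ∀ t ∈ Icc (-τ) (τ + n * τ), u t ≤ M * exp (-γ * (t - τ)) := by
    intro n
    induction n with
    | zero =>
      intro t ht
      simp only [Nat.cast_zero, zero_mul, add_zero] at ht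
      exact (hM t ht).trans (le_mul_of_one_le_right hM0 (one_le_exp (by nlinarith [ht.2])))
    | succ n ih =>
      intro t ht
      rcases le_or_gt t (τ + n * τ) with hle | hlt
      · exact ih t ⟨ht.1, hle⟩
      have hτt : τ ≤ t := by nlinarith [(Nat.cast_nonneg n : (0 : ℝ) ≤ n)]
      push_cast at ht
      refine le_mul_exp_of_le_mul_exp_on_past hτ hα hγ.ne' hchar hS hτt
        (hu.mono Icc_subset_Ici_self) (fun s hs => hd s ⟨hs.1.1, hs.2⟩)
        (fun s hs => hineq s ⟨hs.1.1, hs.2⟩) (hM τ ⟨by linarith, le_rfl⟩)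
        fun s hs => ih s ⟨hs.1, by linarith [hs.2, ht.2]⟩
  intro t ht
  obtain ⟨n, hn⟩ := exists_nat_ge ((t - τ) / τ)
  rw [div_le_iff₀ hτ] at hn
  exact hsteps n t ⟨by linarith, by linarith⟩

theorem gronwall_halanay_variant
    {τ α β : ℝ} (hτ : 0 < τ) (hα : 0 < α) (hαβ : α < β)
    (u u' : ℝ → ℝ)
    (hu_cont : ContinuousOn u (Ici (-τ)))
    (hu_nonneg : ∀ t, -τ ≤ t → 0 ≤ u t)
    (hu_deriv : ∃ S : Set ℝ, S.Countable ∧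
      (∀ t ∈ Ioi τ, t ∉ S → HasDerivAt u (u' t) t) ∧
      ContinuousOn u' (Ioi τ \ S))
    (hineq : ∀ᵐ t ∂volume, τ < t →
      u' t ≤ α / τ * (∫ s in (t - τ)..t, u (s - τ)) - β * u t) :
    ∃ γ : ℝ, γ ∈ Ioo 0 (β - α) ∧
      β - γ = α * exp (γ * τ) * ((exp (γ * τ) - 1) / (γ * τ)) ∧
      (∀ γ' ∈ Ioo 0 (β - α),
        β - γ' = α * exp (γ' * τ) * ((exp (γ' * τ) - 1) / (γ' * τ)) → γ' = γ) ∧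
      ∀ t, τ ≤ t → u t ≤ sSup (u '' Icc (-τ) τ) * exp (-γ * (t - τ)) := by
  obtain ⟨S, hS, hd, hu'⟩ := hu_deriv
  obtain ⟨γ, ⟨hγ, hchar⟩, huniq⟩ := existsUnique_sub_eq_mul_exp_mul_exp_sub_one_div hτ hα hαβ
  refine ⟨γ, hγ, hchar, fun γ' hγ' hγ'char => huniq γ' ⟨hγ', hγ'char⟩, ?_⟩
  have hbdd : BddAbove (u '' Icc (-τ) τ) :=
    (isCompact_Icc.image_of_continuousOn (hu_cont.mono Icc_subset_Ici_self)).bddAbove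
  have hM : ∀ s ∈ Icc (-τ) τ, u s ≤ sSup (u '' Icc (-τ) τ) := fun s hs =>
    le_csSup hbdd (mem_image_of_mem u hs)
  have hrhs : ContinuousOn (fun t => α / τ * (∫ s in (t - τ)..t, u (s - τ)) - β * u t) (Ioi τ) :=
    (continuousOn_const.mul ((continuousOn_intervalIntegral_comp_sub hτ.le hu_cont).mono
      Ioi_subset_Ici_self)).sub
      (continuousOn_const.mul (hu_cont.mono fun t (ht : τ < t) => mem_Ici.2 (by linarith)))
  have hineq' :=
    le_of_ae_le_of_continuousOn_diff isOpen_Ioi (hS.measure_zero volume) hineq hu' hrhs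
  exact le_mul_exp_of_delay_ineq hτ hα.le hγ.1 hchar hS hu_cont (fun t ht => hd t ht.1 ht.2)
    hineq' hM ((hu_nonneg τ (by linarith)).trans (hM τ ⟨by linarith, le_rfl⟩))
end

section
/- Let τ > 0. There exists C ∈ (0,1) such that 1 − C ≥ 4τ e^{Cτ}(e^{Cτ} − 1)/(Cτ) if and only if τ < 1/4. -/
open Real Set

theorem flocking_condition_constant_influence_iff
    {τ : ℝ} (hτ : 0 < τ) :
    (∃ C ∈ Ioo (0 : ℝ) 1,
      1 - C ≥ 4 * τ * exp (C * τ) * (exp (C * τ) - 1) / (C * τ)) ↔ τ < 1 / 4 := by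
  constructor
  · rintro ⟨C, ⟨hC0, hC1⟩, h⟩
    have hx : 0 < C * τ := mul_pos hC0 hτ
    have h1 : C * τ + 1 ≤ exp (C * τ) := Real.add_one_le_exp _
    have key : 4 * τ < 4 * τ * exp (C * τ) * (exp (C * τ) - 1) / (C * τ) := by
      rw [lt_div_iff₀ hx]
      have he1 : C * τ ≤ exp (C * τ) - 1 := by linarith
      have h3 : (C * τ) ^ 2 ≤ (exp (C * τ) - 1) ^ 2 :=
        pow_le_pow_left₀ hx.le he1 2
      nlinarith [mul_pos hτ (mul_pos hx hx), h3, mul_pos hτ hx]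
    linarith
  · intro hτ4
    refine ⟨(1 - 4 * τ) / 2, ⟨by linarith, by linarith⟩, ?_⟩
    set C : ℝ := (1 - 4 * τ) / 2 with hCdef
    have hC0 : 0 < C := by simp only [hCdef]; linarith
    have hC2 : C < 1 / 2 := by simp only [hCdef]; linarith
    set x : ℝ := C * τ with hxdef
    have hx : 0 < x := mul_pos hC0 hτ
    have hx8 : x < 1 / 8 := by
      have := mul_lt_mul_of_pos_right hC2 hτ
      nlinarith
    set e : ℝ := exp x with hedef
    have pe : 0 < e := Real.exp_pos x
    have hA : e - 1 ≤ x * e := by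
      have h := Real.add_one_le_exp (-x)
      have : exp (-x) = 1 / e := by rw [Real.exp_neg]; simp [hedef]
      rw [this] at h
      have h2 : (-x + 1) * e ≤ 1 := by
        rw [div_eq_inv_mul] at h
        calc (-x + 1) * e ≤ (e⁻¹) * e := by
              apply mul_le_mul_of_nonneg_right _ pe.le
              simpa using h
          _ = 1 := inv_mul_cancel₀ pe.ne'
      nlinarith
    have hB : e * (1 - x) ≤ 1 := by nlinarith
    have h1x : 0 < 1 - x := by linarith
    have hE2 : e ^ 2 * (1 - x) ^ 2 ≤ 1 := by
      have h := mul_le_mul hB hB (mul_pos pe h1x).le zero_le_one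
      nlinarith [h]
    have hkey : 4 * τ ≤ (1 - C) * (1 - x) ^ 2 := by
      have hfac : 0 ≤ (1 - 4 * τ) * (1 - τ - 4 * τ ^ 2) := by nlinarith
      simp only [hxdef, hCdef]
      nlinarith [sq_nonneg τ, mul_pos hτ hτ, mul_pos (mul_pos hτ hτ) hτ]
    rw [ge_iff_le, div_le_iff₀ hx]
    have step1 : 4 * τ * e * (e - 1) ≤ 4 * τ * x * e ^ 2 := by
      have h := mul_le_mul_of_nonneg_left hA (by positivity : (0:ℝ) ≤ 4 * τ * e)
      nlinarith [h]
    have step2 : 4 * τ * x * e ^ 2 ≤ (1 - C) * x := by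
      have hsq : 0 < (1 - x) ^ 2 := by positivity
      have hmul : 4 * τ * (e ^ 2 * (1 - x) ^ 2) ≤ (1 - C) * (1 - x) ^ 2 := by
        nlinarith [hE2, hkey, hτ]
      have h4 : 4 * τ * e ^ 2 ≤ 1 - C := by nlinarith [hmul, hsq]
      have := mul_le_mul_of_nonneg_right h4 hx.le
      nlinarith [this]
    linarith
end
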